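/- Let Λ be a strongly connected finite k-graph and suppose g ∈ ℤ^k \ Per Λ. Then there exist a ∈ ℕ^k with a ≠ 0 and, for each vertex v ∈ Λ^0, a path λ_v ∈ vΛ^a, such that for all μ, ν ∈ Λ with s(μ) = s(ν) and d(μ) − d(ν) = g, one has Λ^min(μλ_{s(μ)}, νλ_{s(μ)}) = ∅. -/

import Mathlib

/-- A higher-rank graph (`k`-graph): a countable category with a degree functor
`d : Λ → ℕ^k` satisfying the unique factorisation property.  Morphisms are called
paths; the vertices are the paths of degree `0` (the identity morphisms).
`r` and `s` are the codomain (range) and domain (source) maps.  By convention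
`Λ^{e_i} ≠ ∅` for each standard generator `e_i` of `ℕ^k`. -/
structure KGraph (k : ℕ) where
  Path : Type
  countable : Countable Path
  d : Path → Fin k → ℕ
  r : Path → Path
  s : Path → Path
  d_r : ∀ lam, d (r lam) = 0
  d_s : ∀ lam, d (s lam) = 0
  r_vertex : ∀ v, d v = 0 → r v = v
  s_vertex : ∀ v, d v = 0 → s v = v
  comp : ∀ μ ν : Path, s μ = r ν → Path
  r_comp : ∀ μ ν h, r (comp μ ν h) = r μ
  s_comp : ∀ μ ν h, s (comp μ ν h) = s ν
  d_comp : ∀ μ ν h, d (comp μ ν h) = d μ + d ν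
  id_comp : ∀ lam (h : s (r lam) = r lam), comp (r lam) lam h = lam
  comp_id : ∀ lam (h : s lam = r (s lam)), comp lam (s lam) h = lam
  assoc : ∀ μ ν τ (h1 : s μ = r ν) (h2 : s ν = r τ)
      (h3 : s (comp μ ν h1) = r τ) (h4 : s μ = r (comp ν τ h2)),
      comp (comp μ ν h1) τ h3 = comp μ (comp ν τ h2) h4
  factor : ∀ (lam : Path) (m n : Fin k → ℕ), d lam = m + n →
      ∃! μν : Path × Path, ∃ h : s μν.1 = r μν.2,
        d μν.1 = m ∧ d μν.2 = n ∧ comp μν.1 μν.2 h = lam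
  edge_nonempty : ∀ i : Fin k, ∃ lam, d lam = Pi.single i 1

namespace KGraph

variable {k : ℕ}

/-- The vertices of a `k`-graph: the paths of degree `0`. -/
abbrev Vertex (Λ : KGraph k) : Type := {v : Λ.Path // Λ.d v = 0}

/-- A `k`-graph is finite if `Λ^n` is finite for every `n ∈ ℕ^k`. -/
def IsFinite (Λ : KGraph k) : Prop := ∀ n : Fin k → ℕ, {lam : Λ.Path | Λ.d lam = n}.Finite

/-- A `k`-graph is strongly connected if `vΛw ≠ ∅` for all vertices `v, w`. -/
def StronglyConnected (Λ : KGraph k) : Prop :=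
  ∀ v w : Λ.Path, Λ.d v = 0 → Λ.d w = 0 → ∃ lam : Λ.Path, Λ.r lam = v ∧ Λ.s lam = w

/-- `Λ^min(μ,ν) = {(α,β) : μα = νβ, d(μα) = d(μ) ∨ d(ν)}`. -/
def minSet (Λ : KGraph k) (μ ν : Λ.Path) : Set (Λ.Path × Λ.Path) :=
  {p | ∃ (h1 : Λ.s μ = Λ.r p.1) (h2 : Λ.s ν = Λ.r p.2),
      Λ.comp μ p.1 h1 = Λ.comp ν p.2 h2 ∧ Λ.d μ + Λ.d p.1 = Λ.d μ ⊔ Λ.d ν}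

end KGraph

/-- An infinite path in a `k`-graph `Λ`: a degree-preserving functor `x : Ω_k → Λ`,
recorded by its values `x(m,n)` for `m ≤ n` in `ℕ^k`. -/
structure InfinitePath {k : ℕ} (Λ : KGraph k) where
  toFun : ∀ m n : Fin k → ℕ, m ≤ n → Λ.Path
  d_eq : ∀ m n h, Λ.d (toFun m n h) = n - m
  src : ∀ m n h, Λ.s (toFun m n h) = toFun n n le_rfl
  rng : ∀ m n h, Λ.r (toFun m n h) = toFun m m le_rfl
  comp_eq : ∀ m n p (h1 : m ≤ n) (h2 : n ≤ p)
      (hc : Λ.s (toFun m n h1) = Λ.r (toFun n p h2)),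
      Λ.comp (toFun m n h1) (toFun n p h2) hc = toFun m p (h1.trans h2)

namespace InfinitePath

variable {k : ℕ} {Λ : KGraph k}

/-- The shift map `σ^n` on the infinite-path space, `σ^n(x)(p,q) = x(n+p, n+q)`. -/
def shift (x : InfinitePath Λ) (n : Fin k → ℕ) : InfinitePath Λ where
  toFun p q h := x.toFun (n + p) (n + q) (add_le_add le_rfl h)
  d_eq p q h := by
    rw [x.d_eq]
    funext i
    exact Nat.add_sub_add_left (n i) (q i) (p i)
  src p q h := x.src _ _ _
  rng p q h := x.rng _ _ _
  comp_eq p q t h1 h2 hc := x.comp_eq _ _ _ _ _ hc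

/-- The range `r(x) = x(0,0)` of an infinite path. -/
def range (x : InfinitePath Λ) : Λ.Path := x.toFun 0 0 le_rfl

end InfinitePath

/-- `ExtEq Λ lam y x` says that `y = lam · x`, i.e. `y(0, d(lam)) = lam` and
`σ^{d(lam)}(y) = x`.  (Such an extension is unique when it exists.) -/
def KGraph.ExtEq {k : ℕ} (Λ : KGraph k) (lam : Λ.Path) (y x : InfinitePath Λ) : Prop :=
  y.toFun 0 (Λ.d lam) zero_le = lam ∧ y.shift (Λ.d lam) = x

/-- `Λ.IsTheta m n μ ν` says that `μ ∈ Λ^m`, `ν ∈ Λ^n`, and `μx = νx` for every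
infinite path `x ∈ Z(s(μ))`; i.e. `ν = θ_{m,n}(μ)`. -/
def KGraph.IsTheta {k : ℕ} (Λ : KGraph k) (m n : Fin k → ℕ) (μ ν : Λ.Path) : Prop :=
  Λ.d μ = m ∧ Λ.d ν = n ∧
    ∀ x : InfinitePath Λ, x.range = Λ.s μ →
      ∃ y : InfinitePath Λ, Λ.ExtEq μ y x ∧ Λ.ExtEq ν y x

/-- The periodicity group `Per Λ = {m − n : σ^m(x) = σ^n(x) for all x ∈ Λ^∞} ⊆ ℤ^k`. -/
def KGraph.Per {k : ℕ} (Λ : KGraph k) : Set (Fin k → ℤ) :=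
  {g | ∃ m n : Fin k → ℕ, (∀ i, (m i : ℤ) - n i = g i) ∧
      ∀ x : InfinitePath Λ, x.shift m = x.shift n}

/-- `Λ` is aperiodic if every vertex `v` admits `x ∈ Z(v)` with
`σ^m(x) ≠ σ^n(x)` for all `m ≠ n` in `ℕ^k`. -/
def KGraph.Aperiodic {k : ℕ} (Λ : KGraph k) : Prop :=
  ∀ v : Λ.Path, Λ.d v = 0 → ∃ x : InfinitePath Λ, x.range = v ∧
    ∀ m n : Fin k → ℕ, m ≠ n → x.shift m ≠ x.shift n

/-! Since `g ∉ Per Λ`, some infinite path `x` has `σ^m x ≠ σ^n x` with `m - n = g`, so some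
window `x(m, m + N)` differs from `x(n, n + N)`. Then `χ = x(0, m + n + N)` cannot occur in a
path at two positions differing by `g`: the copy at `p` reads `x(n, n + N)` at `p + n`, the copy
at `q` reads `x(m, m + N)` at `q + m = p + n`. Every path containing `χ` inherits this, and
connecting each vertex to `χ` and padding behind it gives the `λ_v` of one common degree. If
`μλα = νλβ`, then `λ` occurs in this path at `d(μ)` and at `d(ν)`, so no common extension of
`μλ` and `νλ` exists at all. -/

namespace KGraph

variable {k : ℕ}

open Classical in
/-- Composition made total: the junk value `μ` when `s μ ≠ r ν`. Composites can then be
rewritten without transporting composability proofs. -/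
noncomputable def comp' (Λ : KGraph k) (μ ν : Λ.Path) : Λ.Path :=
  if h : Λ.s μ = Λ.r ν then Λ.comp μ ν h else μ

variable {Λ : KGraph k} {μ ν τ : Λ.Path}

theorem comp'_eq (h : Λ.s μ = Λ.r ν) : Λ.comp' μ ν = Λ.comp μ ν h := dif_pos h

theorem d_comp' (h : Λ.s μ = Λ.r ν) : Λ.d (Λ.comp' μ ν) = Λ.d μ + Λ.d ν := by
  rw [comp'_eq h, Λ.d_comp]

theorem r_comp' (h : Λ.s μ = Λ.r ν) : Λ.r (Λ.comp' μ ν) = Λ.r μ := by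
  rw [comp'_eq h, Λ.r_comp]

theorem s_comp' (h : Λ.s μ = Λ.r ν) : Λ.s (Λ.comp' μ ν) = Λ.s ν := by
  rw [comp'_eq h, Λ.s_comp]

theorem comp'_assoc (h₁ : Λ.s μ = Λ.r ν) (h₂ : Λ.s ν = Λ.r τ) :
    Λ.comp' (Λ.comp' μ ν) τ = Λ.comp' μ (Λ.comp' ν τ) := by
  have h₃ : Λ.s (Λ.comp μ ν h₁) = Λ.r τ := by rw [Λ.s_comp]; exact h₂
  have h₄ : Λ.s μ = Λ.r (Λ.comp ν τ h₂) := by rw [Λ.r_comp]; exact h₁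
  rw [comp'_eq h₁, comp'_eq h₂, comp'_eq h₃, comp'_eq h₄, Λ.assoc μ ν τ h₁ h₂ h₃ h₄]

theorem eq_of_comp'_eq {μ₁ ν₁ μ₂ ν₂ : Λ.Path} (h₁ : Λ.s μ₁ = Λ.r ν₁) (h₂ : Λ.s μ₂ = Λ.r ν₂)
    (hd : Λ.d μ₁ = Λ.d μ₂) (h : Λ.comp' μ₁ ν₁ = Λ.comp' μ₂ ν₂) : μ₁ = μ₂ ∧ ν₁ = ν₂ := by
  have hdν : Λ.d ν₁ = Λ.d ν₂ := by
    have := congrArg Λ.d h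
    rw [d_comp' h₁, d_comp' h₂, hd] at this
    exact add_left_cancel this
  obtain ⟨_, -, huniq⟩ := Λ.factor (Λ.comp' μ₁ ν₁) (Λ.d μ₁) (Λ.d ν₁) (d_comp' h₁)
  have := (huniq (μ₁, ν₁) ⟨h₁, rfl, rfl, (comp'_eq h₁).symm⟩).trans
    (huniq (μ₂, ν₂) ⟨h₂, hd.symm, hdν.symm, by rw [← comp'_eq h₂, h]⟩).symm
  exact Prod.ext_iff.mp this

theorem exists_comp'_eq {m n : Fin k → ℕ} (h : Λ.d τ = m + n) :
    ∃ μ ν, Λ.s μ = Λ.r ν ∧ Λ.d μ = m ∧ Λ.d ν = n ∧ Λ.comp' μ ν = τ := by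
  obtain ⟨⟨μ, ν⟩, ⟨hc, hμ, hν, hτ⟩, -⟩ := Λ.factor τ m n h
  exact ⟨μ, ν, hc, hμ, hν, by rw [comp'_eq hc, hτ]⟩

variable (Λ) in
def OccursAt (l τ : Λ.Path) (p : Fin k → ℕ) : Prop :=
  ∃ α β, Λ.s α = Λ.r l ∧ Λ.s l = Λ.r β ∧ Λ.d α = p ∧ Λ.comp' α (Λ.comp' l β) = τ

theorem occursAt_comp'_comp' {α l β : Λ.Path} (h₁ : Λ.s α = Λ.r l) (h₂ : Λ.s l = Λ.r β) :
    Λ.OccursAt l (Λ.comp' α (Λ.comp' l β)) (Λ.d α) :=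
  ⟨α, β, h₁, h₂, rfl, rfl⟩

theorem occursAt_comp_comp {ρ l γ : Λ.Path} (h₁ : Λ.s ρ = Λ.r l)
    (h₂ : Λ.s (Λ.comp ρ l h₁) = Λ.r γ) :
    Λ.OccursAt l (Λ.comp (Λ.comp ρ l h₁) γ h₂) (Λ.d ρ) := by
  have hlγ : Λ.s l = Λ.r γ := by rw [← Λ.s_comp ρ l h₁]; exact h₂
  rw [← comp'_eq h₂, ← comp'_eq h₁, comp'_assoc h₁ hlγ]
  exact occursAt_comp'_comp' h₁ hlγ

theorem OccursAt.trans {y z : Λ.Path} {p q : Fin k → ℕ} (hy : Λ.OccursAt y τ p)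
    (hz : Λ.OccursAt z y q) : Λ.OccursAt z τ (p + q) := by
  obtain ⟨α, β, hαy, hyβ, rfl, rfl⟩ := hy
  obtain ⟨γ, δ, hγz, hzδ, rfl, rfl⟩ := hz
  have hγzδ : Λ.s γ = Λ.r (Λ.comp' z δ) := by rwa [r_comp' hzδ]
  have hαγ : Λ.s α = Λ.r γ := by rwa [r_comp' hγzδ] at hαy
  have hδβ : Λ.s δ = Λ.r β := by rwa [s_comp' hγzδ, s_comp' hzδ] at hyβ
  have hzδβ : Λ.s z = Λ.r (Λ.comp' δ β) := by rwa [r_comp' hδβ]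
  refine ⟨Λ.comp' α γ, Λ.comp' δ β, by rwa [s_comp' hαγ], hzδβ, d_comp' hαγ, ?_⟩
  rw [comp'_assoc hαγ (by rwa [r_comp' hzδβ]), ← comp'_assoc hzδ hδβ,
    comp'_assoc hγzδ (by rwa [s_comp' hzδ])]

theorem OccursAt.unique {y z : Λ.Path} {p : Fin k → ℕ} (hy : Λ.OccursAt y τ p)
    (hz : Λ.OccursAt z τ p) (hd : Λ.d y = Λ.d z) : y = z := by
  obtain ⟨α, β, hαy, hyβ, rfl, hτ⟩ := hy
  obtain ⟨α', β', hαz, hzβ', hα', rfl⟩ := hz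
  have htail := (eq_of_comp'_eq (by rwa [r_comp' hyβ]) (by rwa [r_comp' hzβ']) hα'.symm hτ).2
  exact (eq_of_comp'_eq hyβ hzβ' hd htail).1

variable (Λ) in
def NoOverlap (g : Fin k → ℤ) (l : Λ.Path) : Prop :=
  ∀ τ p q, (∀ i, (p i : ℤ) - q i = g i) → Λ.OccursAt l τ p → Λ.OccursAt l τ q → False

theorem NoOverlap.of_occursAt {g : Fin k → ℤ} {l y : Λ.Path} {q : Fin k → ℕ}
    (h : Λ.NoOverlap g l) (hl : Λ.OccursAt l y q) : Λ.NoOverlap g y :=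
  fun τ p p' hpp' hp hp' =>
    h τ (p + q) (p' + q) (fun i => by push_cast [Pi.add_apply]; linarith [hpp' i])
      (hp.trans hl) (hp'.trans hl)

theorem NoOverlap.minSet_eq_empty {g : Fin k → ℤ} {l : Λ.Path} (h : Λ.NoOverlap g l)
    (hμν : ∀ i, (Λ.d μ i : ℤ) - Λ.d ν i = g i) (h₁ : Λ.s μ = Λ.r l) (h₂ : Λ.s ν = Λ.r l) :
    Λ.minSet (Λ.comp μ l h₁) (Λ.comp ν l h₂) = ∅ := by
  refine Set.eq_empty_of_forall_notMem fun ⟨α, β⟩ ⟨hα, hβ, heq, _⟩ => ?_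
  refine h _ _ _ hμν (occursAt_comp_comp h₁ hα) ?_
  rw [heq]
  exact occursAt_comp_comp h₂ hβ

end KGraph

namespace InfinitePath

variable {k : ℕ} {Λ : KGraph k}

@[ext]
theorem ext {x y : InfinitePath Λ} (h : ∀ p q hpq, x.toFun p q hpq = y.toFun p q hpq) :
    x = y := by
  obtain ⟨f, _⟩ := x
  obtain ⟨f', _⟩ := y
  obtain rfl : f = f' := funext fun p => funext fun q => funext (h p q)
  rfl

theorem s_toFun_eq_r_toFun (x : InfinitePath Λ) {p q t : Fin k → ℕ} (h₁ : p ≤ q) (h₂ : q ≤ t) :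
    Λ.s (x.toFun p q h₁) = Λ.r (x.toFun q t h₂) :=
  (x.src _ _ _).trans (x.rng _ _ _).symm

theorem comp'_toFun (x : InfinitePath Λ) {p q t : Fin k → ℕ} (h₁ : p ≤ q) (h₂ : q ≤ t) :
    Λ.comp' (x.toFun p q h₁) (x.toFun q t h₂) = x.toFun p t (h₁.trans h₂) := by
  rw [KGraph.comp'_eq (x.s_toFun_eq_r_toFun h₁ h₂), x.comp_eq]

theorem occursAt_toFun (x : InfinitePath Λ) {p q t : Fin k → ℕ} (h₁ : p ≤ q) (h₂ : q ≤ t) :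
    Λ.OccursAt (x.toFun p q h₁) (x.toFun 0 t zero_le) p := by
  refine ⟨x.toFun 0 p zero_le, x.toFun q t h₂, x.s_toFun_eq_r_toFun _ _,
    x.s_toFun_eq_r_toFun _ _, by rw [x.d_eq, tsub_zero], ?_⟩
  rw [x.comp'_toFun, x.comp'_toFun]

theorem exists_toFun_ne_of_shift_ne (x : InfinitePath Λ) {m n : Fin k → ℕ}
    (h : x.shift m ≠ x.shift n) :
    ∃ N, x.toFun m (m + N) le_self_add ≠ x.toFun n (n + N) le_self_add := by
  contrapose! h
  ext p q hpq
  have hm := x.comp'_toFun (le_self_add : m ≤ m + p) (add_le_add_right hpq m)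
  have hn := x.comp'_toFun (le_self_add : n ≤ n + p) (add_le_add_right hpq n)
  rw [h q] at hm
  refine (KGraph.eq_of_comp'_eq (x.s_toFun_eq_r_toFun _ _) (x.s_toFun_eq_r_toFun _ _) ?_
    (hm.trans hn.symm)).2
  simp only [x.d_eq, add_tsub_cancel_left]

theorem noOverlap_toFun (x : InfinitePath Λ) {m n N : Fin k → ℕ} {g : Fin k → ℤ}
    (hmn : ∀ i, (m i : ℤ) - n i = g i)
    (hN : x.toFun m (m + N) le_self_add ≠ x.toFun n (n + N) le_self_add) :
    Λ.NoOverlap g (x.toFun 0 (m + n + N) zero_le) := by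
  intro τ p q hpq hp hq
  have hpos : q + m = p + n := funext fun i => by
    have := hmn i; have := hpq i; simp only [Pi.add_apply]; omega
  have hwm := hq.trans (x.occursAt_toFun (le_self_add : m ≤ m + N) (by
    intro i; simp only [Pi.add_apply]; omega))
  have hwn := hp.trans (x.occursAt_toFun (le_self_add : n ≤ n + N) (by
    intro i; simp only [Pi.add_apply]; omega))
  rw [hpos] at hwm
  exact hN (hwm.unique hwn (by simp only [x.d_eq, add_tsub_cancel_left]))

end InfinitePath

namespace KGraph

variable {k : ℕ} {Λ : KGraph k}

theorem exists_noOverlap_of_notMem_per {g : Fin k → ℤ} (hg : g ∉ Λ.Per) :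
    ∃ χ : Λ.Path, Λ.d χ ≠ 0 ∧ Λ.NoOverlap g χ := by
  set m : Fin k → ℕ := fun i => (g i).toNat
  set n : Fin k → ℕ := fun i => (-g i).toNat
  have hmn : ∀ i, (m i : ℤ) - n i = g i := fun i => by simp only [m, n]; omega
  obtain ⟨x, hx⟩ : ∃ x : InfinitePath Λ, x.shift m ≠ x.shift n := by
    by_contra! h
    exact hg ⟨m, n, hmn, h⟩
  obtain ⟨N, hN⟩ := x.exists_toFun_ne_of_shift_ne hx
  refine ⟨_, fun h0 => hg ⟨0, 0, fun i => ?_, fun _ => rfl⟩, x.noOverlap_toFun hmn hN⟩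
  have := congrFun ((x.d_eq _ _ _).symm.trans h0) i
  simp only [Pi.sub_apply, Pi.add_apply, Pi.zero_apply, tsub_zero] at this
  have := hmn i
  omega

theorem exists_edge (hsc : Λ.StronglyConnected) (i : Fin k) (v : Λ.Vertex) :
    ∃ e, Λ.r e = v.1 ∧ Λ.d e = Pi.single i 1 := by
  obtain ⟨f, hf⟩ := Λ.edge_nonempty i
  obtain ⟨ρ, hρv, hρf⟩ := hsc v.1 (Λ.r f) v.2 (Λ.d_r f)
  obtain ⟨e, _, hc, he, _, hcomp⟩ :=
    exists_comp'_eq (m := Pi.single i 1) (n := Λ.d ρ) (by rw [d_comp' hρf, hf, add_comm])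
  refine ⟨e, ?_, he⟩
  rw [← r_comp' hc, hcomp, r_comp' hρf, hρv]

theorem exists_path_of_degree (hsc : Λ.StronglyConnected) (b : Fin k → ℕ) (v : Λ.Vertex) :
    ∃ ζ, Λ.r ζ = v.1 ∧ Λ.d ζ = b := by
  induction b using Pi.single_induction generalizing v with
  | zero => exact ⟨v.1, Λ.r_vertex _ v.2, v.2⟩
  | add b c hb hc =>
    obtain ⟨ζ, hζv, hζb⟩ := hb v
    obtain ⟨η, hηs, hηc⟩ := hc ⟨Λ.s ζ, Λ.d_s ζ⟩
    exact ⟨Λ.comp' ζ η, by rw [r_comp' hηs.symm, hζv], by rw [d_comp' hηs.symm, hζb, hηc]⟩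
  | single i j =>
    induction j generalizing v with
    | zero => exact ⟨v.1, Λ.r_vertex _ v.2, by rw [v.2, Pi.single_zero]⟩
    | succ j ih =>
      obtain ⟨ζ, hζv, hζj⟩ := ih v
      obtain ⟨e, hes, hei⟩ := exists_edge hsc i ⟨Λ.s ζ, Λ.d_s ζ⟩
      exact ⟨Λ.comp' ζ e, by rw [r_comp' hes.symm, hζv],
        by rw [d_comp' hes.symm, hζj, hei, ← Pi.single_add]⟩

theorem exists_uniform_extensions (hfin : Λ.IsFinite) (hsc : Λ.StronglyConnected)
    (χ : Λ.Path) : ∃ a, Λ.d χ ≤ a ∧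
      ∀ v : Λ.Vertex, ∃ l, Λ.r l = v.1 ∧ Λ.d l = a ∧ ∃ p, Λ.OccursAt χ l p := by
  have : Finite Λ.Vertex := (hfin 0).to_subtype
  choose ρ hρv hρχ using fun v : Λ.Vertex => hsc v.1 (Λ.r χ) v.2 (Λ.d_r χ)
  obtain ⟨B, hB⟩ := (Set.finite_range fun v => Λ.d (ρ v)).bddAbove
  refine ⟨B + Λ.d χ, le_add_self, fun v => ?_⟩
  have hρB : Λ.d (ρ v) ≤ B := hB ⟨v, rfl⟩
  obtain ⟨ζ, hζ, hdζ⟩ := exists_path_of_degree hsc (B - Λ.d (ρ v)) ⟨Λ.s χ, Λ.d_s χ⟩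
  have hρ : Λ.s (ρ v) = Λ.r (Λ.comp' χ ζ) := by rw [r_comp' hζ.symm, hρχ]
  refine ⟨_, by rw [r_comp' hρ, hρv], ?_, _, occursAt_comp'_comp' (hρχ v) hζ.symm⟩
  rw [d_comp' hρ, d_comp' hζ.symm, hdζ, add_left_comm, add_tsub_cancel_of_le hρB, add_comm]

end KGraph

/-- For `g ∈ ℤ^k \ Per Λ` there exist `a ∈ ℕ^k \ {0}` and paths `λ_v ∈ vΛ^a` for each
vertex `v` such that `Λ^min(μλ_{s(μ)}, νλ_{s(μ)}) = ∅` whenever `s(μ) = s(ν)` and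
`d(μ) − d(ν) = g`. -/
theorem separating_tails {k : ℕ} (Λ : KGraph k)
    (hfin : Λ.IsFinite) (hsc : Λ.StronglyConnected)
    (g : Fin k → ℤ) (hg : g ∉ Λ.Per) :
    ∃ a : Fin k → ℕ, a ≠ 0 ∧
      ∃ lam : Λ.Vertex → Λ.Path,
        (∀ v : Λ.Vertex, Λ.d (lam v) = a ∧ Λ.r (lam v) = v.1) ∧
        ∀ μ ν : Λ.Path, Λ.s μ = Λ.s ν →
          (∀ i, (Λ.d μ i : ℤ) - Λ.d ν i = g i) →
          ∀ (h1 : Λ.s μ = Λ.r (lam ⟨Λ.s μ, Λ.d_s μ⟩))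
            (h2 : Λ.s ν = Λ.r (lam ⟨Λ.s μ, Λ.d_s μ⟩)),
            Λ.minSet (Λ.comp μ (lam ⟨Λ.s μ, Λ.d_s μ⟩) h1)
              (Λ.comp ν (lam ⟨Λ.s μ, Λ.d_s μ⟩) h2) = ∅ := by
  obtain ⟨χ, hχ0, hχ⟩ := KGraph.exists_noOverlap_of_notMem_per hg
  obtain ⟨a, hχa, hext⟩ := KGraph.exists_uniform_extensions hfin hsc χ
  choose lam hr hd p hocc using hext
  refine ⟨a, fun ha => hχ0 (le_antisymm (hχa.trans_eq ha) zero_le), lam,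
    fun v => ⟨hd v, hr v⟩, ?_⟩
  intro μ ν _ hμν h1 h2
  exact (hχ.of_occursAt (hocc _)).minSet_eq_empty hμν h1 h2
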